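/- arXiv:1701.00061 — 3 statements merged into one kernel-verified Lean document; each statement's English description precedes it below -/
import Mathlib

section
/- Let K be a totally real number field of degree m over ℚ, let E be a totally complex extension of K with [E : K] = 2, let φ₁, …, φ_m : E → ℂ be pairwise distinct, pairwise non-conjugate ring embeddings, and let α ∈ K satisfy ℚ(α) = K. Let D_α : ℂ^m → ℂ^m be the diagonal map D_α(z)_i = φ_i(algebraMap K E α)·z_i. Then, regarding ℂ^m as a real vector space of dimension 2m and D_α as an ℝ-linear endomorphism, the characteristic polynomial of D_α over ℝ equals the square of the image in ℝ[X] of the minimal polynomial of α over ℚ: charpoly_ℝ(D_α) = (minpoly_ℚ(α) mapped to ℝ[X])². -/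
/-!
Each `φᵢ` restricts on `K` to a real embedding `ρᵢ : K → ℝ`. Because `[E : K] = 2` and `φᵢ` is not
real, `φᵢ` and `conj ∘ φᵢ` are the only extensions of `ρᵢ` to `E`, so the hypothesis on the `φᵢ`
makes the `ρᵢ` pairwise distinct; as `α` generates `K`, the `ρᵢ(α)` are then `m` distinct real
roots of the degree-`m` polynomial `minpoly ℚ α`, which therefore splits as `∏ (X - ρᵢ(α))`.
Over `ℝ`, the map `D_α` multiplies the `i`-th copy of `ℂ ≅ ℝ²` by the real number `ρᵢ(α)`, so its
characteristic polynomial is `∏ (X - ρᵢ(α))²`.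
-/

/-- The `ℂ`-linear diagonal map `D_u : ℂ^m → ℂ^m`,
`D_u(z₁, …, z_m) = (φ₁(u)·z₁, …, φ_m(u)·z_m)`. -/
noncomputable def cmDiagMap (E : Type*) [Field E] (m : ℕ)
    (φ : Fin m → (E →+* ℂ)) (u : E) : (Fin m → ℂ) →ₗ[ℂ] (Fin m → ℂ) :=
  LinearMap.pi fun i => φ i u • LinearMap.proj i

open Polynomial NumberField

theorem Polynomial.Monic.eq_prod_X_sub_C_of_injective {R ι : Type*} [CommRing R] [IsDomain R]
    [Fintype ι] {p : R[X]} (hp : p.Monic) {c : ι → R} (hc : Function.Injective c)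
    (hroot : ∀ i, p.IsRoot (c i)) (hdeg : p.natDegree = Fintype.card ι) :
    p = ∏ i, (X - C (c i)) := by
  have hprod : (∏ i, (X - C (c i))).Monic := monic_prod_of_monic _ _ fun i _ => monic_X_sub_C _
  have hle : Finset.univ.val.map c ≤ p.roots :=
    (Multiset.le_iff_subset (Finset.univ.nodup.map hc)).mpr fun x hx => by
      obtain ⟨i, -, rfl⟩ := Multiset.mem_map.mp hx
      exact (mem_roots hp.ne_zero).mpr (hroot i)
  have hdvd : ∏ i, (X - C (c i)) ∣ p := by
    have := (Multiset.prod_X_sub_C_dvd_iff_le_roots hp.ne_zero _).mpr hle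
    rwa [Multiset.map_map] at this
  refine (eq_of_dvd_of_natDegree_le_of_leadingCoeff hdvd ?_ ?_).symm
  · rw [natDegree_prod_of_monic _ _ fun i _ => monic_X_sub_C (c i)]
    simp [hdeg]
  · rw [hprod.leadingCoeff, hp.leadingCoeff]

theorem LinearMap.charpoly_pi_smul_proj {R M ι : Type*} [CommRing R] [Nontrivial R]
    [AddCommGroup M] [Module R M] [Module.Free R M] [Module.Finite R M] [Fintype ι]
    (r : ι → R) :
    (LinearMap.pi fun i => r i • LinearMap.proj i : (ι → M) →ₗ[R] (ι → M)).charpoly =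
      ∏ i, (X - C (r i)) ^ Module.finrank R M := by
  classical
  set f : (ι → M) →ₗ[R] ι → M := LinearMap.pi fun i => r i • LinearMap.proj i
  let b := Pi.basis fun _ : ι => Module.Free.chooseBasis R M
  have hb : ∀ p, f (b p) = r p.1 • b p := by
    rintro ⟨j, l⟩
    ext i
    by_cases h : i = j
    · subst h; simp [f, b]
    · simp [f, b, h]
  have hmat : LinearMap.toMatrix b b f = Matrix.diagonal fun p => r p.1 := by
    ext p q
    rw [LinearMap.toMatrix_apply, hb, map_smul, b.repr_self, Finsupp.smul_apply,
      Finsupp.single_apply, Matrix.diagonal_apply]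
    by_cases h : q = p
    · simp [h]
    · simp [h, Ne.symm h]
  rw [← LinearMap.charpoly_toMatrix f b, hmat, Matrix.charpoly_diagonal,
    ← Finset.univ_sigma_univ, Finset.prod_sigma]
  simp [Module.finrank_eq_card_chooseBasisIndex]

theorem RingHom.ext_of_adjoin_simple_eq_top {K A : Type*} [Field K] [Ring A] [Algebra ℚ K]
    [Algebra ℚ A] [Algebra.IsAlgebraic ℚ K] {α : K} (hα : IntermediateField.adjoin ℚ {α} = ⊤)
    {f g : K →+* A} (h : f α = g α) : f = g := by
  have hadj := Algebra.adjoin_eq_top_of_primitive_element (Algebra.IsAlgebraic.isAlgebraic α) hα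
  exact congrArg AlgHom.toRingHom <|
    AlgHom.ext_of_adjoin_eq_top (φ₁ := f.toRatAlgHom) (φ₂ := g.toRatAlgHom) hadj (by simpa using h)

theorem RingHom.eq_or_eq_conj_of_comp_algebraMap_eq {K E : Type*} [Field K] [CharZero K]
    [Field E] [Algebra K E] (hdeg : Module.finrank K E = 2) {ψ ψ' : E →+* ℂ}
    (hreal : ∀ x : K, (ψ (algebraMap K E x)).im = 0) (hnonreal : ∃ x, (ψ x).im ≠ 0)
    (h : ψ'.comp (algebraMap K E) = ψ.comp (algebraMap K E)) :
    ψ' = ψ ∨ ψ' = (starRingEnd ℂ).comp ψ := by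
  let _ : Algebra K ℂ := (ψ.comp (algebraMap K E)).toAlgebra
  have : FiniteDimensional K E := .of_finrank_pos (by omega)
  let Ψ : E →ₐ[K] ℂ := ⟨ψ, fun _ => rfl⟩
  let Ψ' : E →ₐ[K] ℂ := ⟨ψ', RingHom.congr_fun h⟩
  let Ψc : E →ₐ[K] ℂ := ⟨(starRingEnd ℂ).comp ψ, fun x => Complex.conj_eq_iff_im.mpr (hreal x)⟩
  have hne : Ψ ≠ Ψc := fun hΨ => by
    obtain ⟨x, hx⟩ := hnonreal
    exact hx (Complex.conj_eq_iff_im.mp (AlgHom.congr_fun hΨ x).symm)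
  by_contra! h'
  have hcard : 2 < Fintype.card (E →ₐ[K] ℂ) := Fintype.two_lt_card_iff.mpr
    ⟨Ψ', Ψ, Ψc, fun e => h'.1 congr(($e).toRingHom), fun e => h'.2 congr(($e).toRingHom), hne⟩
  rw [AlgHom.card, hdeg] at hcard
  exact lt_irrefl _ hcard

theorem minpoly_map_eq_prod_X_sub_C {K L ι : Type*} [Field K] [CharZero K]
    [FiniteDimensional ℚ K] [Field L] [CharZero L] [Fintype ι] {α : K}
    (hα : IntermediateField.adjoin ℚ {α} = ⊤) (hcard : Fintype.card ι = Module.finrank ℚ K)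
    (ρ : ι → K →+* L) (hρ : Function.Injective fun i => ρ i α) :
    (minpoly ℚ α).map (algebraMap ℚ L) = ∏ i, (X - C (ρ i α)) := by
  have hint : IsIntegral ℚ α := .of_finite ℚ α
  refine ((minpoly.monic hint).map _).eq_prod_X_sub_C_of_injective hρ (fun i => ?_) ?_
  · simpa [aeval_def, eval_map] using minpoly.aeval_algHom ℚ (ρ i).toRatAlgHom α
  · rw [natDegree_map, ← IntermediateField.adjoin.finrank hint, hα,
      IntermediateField.finrank_top', hcard]

theorem cmDiagMap_real_charpoly_general
    (K E : Type*) [Field K] [NumberField K] [Field E]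
    [Algebra K E] (m : ℕ) (hm : Module.finrank ℚ K = m)
    (hdeg : Module.finrank K E = 2)
    (hK : ∀ τ : K →+* ℂ, ∀ x : K, (τ x).im = 0)
    (hE : ∀ ψ : E →+* ℂ, ∃ x : E, (ψ x).im ≠ 0)
    (φ : Fin m → (E →+* ℂ))
    (hφ : ∀ i j : Fin m, i ≠ j →
      φ j ≠ φ i ∧ φ j ≠ (starRingEnd ℂ).comp (φ i))
    (α : K) (hα : IntermediateField.adjoin ℚ {α} = ⊤) :
    ((cmDiagMap E m φ (algebraMap K E α)).restrictScalars ℝ).charpoly =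
      ((minpoly ℚ α).map (algebraMap ℚ ℝ)) ^ 2 := by
  have hτ_inj : Function.Injective fun i => (φ i).comp (algebraMap K E) := by
    intro i j hij
    by_contra hne
    rcases RingHom.eq_or_eq_conj_of_comp_algebraMap_eq hdeg (hK ((φ i).comp _)) (hE (φ i))
      hij.symm with h | h
    exacts [(hφ i j hne).1 h, (hφ i j hne).2 h]
  have hreal (i : Fin m) : ComplexEmbedding.IsReal ((φ i).comp (algebraMap K E)) :=
    ComplexEmbedding.isReal_iff.mpr <| RingHom.ext fun x => Complex.conj_eq_iff_im.mpr (hK _ x)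
  let ρ (i : Fin m) : K →+* ℝ := (hreal i).embedding
  have hρ_inj : Function.Injective fun i => ρ i α := fun i j hij => hτ_inj <| by
    ext x
    simpa [ρ] using
      congrArg ((↑) : ℝ → ℂ) (RingHom.congr_fun (RingHom.ext_of_adjoin_simple_eq_top hα hij) x)
  have hdiag : (cmDiagMap E m φ (algebraMap K E α)).restrictScalars ℝ =
      LinearMap.pi fun i => ρ i α • LinearMap.proj i := by
    ext z i
    simp [cmDiagMap, ρ]
  rw [hdiag, LinearMap.charpoly_pi_smul_proj, Complex.finrank_real_complex,
    minpoly_map_eq_prod_X_sub_C hα (by rw [Fintype.card_fin, hm]) ρ hρ_inj, Finset.prod_pow]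

/-- Let `K` be a totally real number field of degree `m` over `ℚ`, `E` a
totally complex quadratic extension of `K`, `φ₁, …, φ_m : E → ℂ` pairwise
distinct, pairwise non-conjugate complex embeddings, and `α` a generator of
`K` over `ℚ`.  Regarding the diagonal map `D_α` as an `ℝ`-linear endomorphism
of `ℂ^m ≅ ℝ^{2m}`, its characteristic polynomial over `ℝ` is the square of
(the image in `ℝ[X]` of) the minimal polynomial of `α` over `ℚ`. -/
theorem cmDiagMap_real_charpoly
    (K E : Type*) [Field K] [NumberField K] [Field E] [NumberField E]
    [Algebra K E] (m : ℕ) (hm : Module.finrank ℚ K = m)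
    (hdeg : Module.finrank K E = 2)
    (hK : ∀ τ : K →+* ℂ, ∀ x : K, (τ x).im = 0)
    (hE : ∀ ψ : E →+* ℂ, ∃ x : E, (ψ x).im ≠ 0)
    (φ : Fin m → (E →+* ℂ))
    (hφ : ∀ i j : Fin m, i ≠ j →
      φ j ≠ φ i ∧ φ j ≠ (starRingEnd ℂ).comp (φ i))
    (α : K) (hα : IntermediateField.adjoin ℚ {α} = ⊤) :
    ((cmDiagMap E m φ (algebraMap K E α)).restrictScalars ℝ).charpoly =
      ((minpoly ℚ α).map (algebraMap ℚ ℝ)) ^ 2 :=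
  cmDiagMap_real_charpoly_general K E m hm hdeg hK hE φ hφ α hα
end

section
/- Let K be a totally real number field of degree m ≥ 2 over ℚ, let E be a totally complex extension of K with [E : K] = 2, let φ₁, …, φ_m : E → ℂ be pairwise distinct, pairwise non-conjugate ring embeddings, let α ∈ K with ℚ(α) = K, and let σ : K → ℝ be a real embedding with σ(α) > 1. Let D_α : ℂ^m → ℂ^m be the diagonal map D_α(z)_i = φ_i(algebraMap K E α)·z_i, regarded as an ℝ-linear endomorphism of ℂ^m ≅ ℝ^{2m}. Then σ(α)² is an eigenvalue of the induced ℝ-linear endomorphism Λ²(D_α) of the second exterior power Λ²_ℝ(ℂ^m); in particular Λ²(D_α) has an eigenvalue strictly greater than 1. -/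
/-- The functorially induced endomorphism `Λ²(g)` of the second exterior power
`⋀[R]^2 M` of an endomorphism `g` of `M`. -/
noncomputable def exteriorSquareMap (R : Type*) [CommRing R]
    {M : Type*} [AddCommGroup M] [Module R M] (g : M →ₗ[R] M) :
    ⋀[R]^2 M →ₗ[R] ⋀[R]^2 M :=
  (ExteriorAlgebra.map g).toLinearMap.restrict
    (p := ⋀[R]^2 M) (q := ⋀[R]^2 M)
    (by
      have hbase : Submodule.map (ExteriorAlgebra.map g).toLinearMap
          (LinearMap.range (ExteriorAlgebra.ι R (M := M))) ≤
          LinearMap.range (ExteriorAlgebra.ι R (M := M)) := by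
        rintro x hx
        obtain ⟨y, ⟨v, rfl⟩, rfl⟩ := hx
        exact ⟨g v, (ExteriorAlgebra.map_apply_ι g v).symm⟩
      have hpow : Submodule.map (ExteriorAlgebra.map g).toLinearMap (⋀[R]^2 M) ≤
          ⋀[R]^2 M := by
        show Submodule.map (ExteriorAlgebra.map g).toLinearMap
            (LinearMap.range (ExteriorAlgebra.ι R (M := M)) ^ 2) ≤
          LinearMap.range (ExteriorAlgebra.ι R (M := M)) ^ 2
        rw [pow_two, Submodule.map_mul]
        exact mul_le_mul' hbase hbase
      intro x hx
      exact hpow ⟨x, hx, rfl⟩)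

/-!
Extend `σ` to an embedding `ψ : E → ℂ`. Since `E` has no real embeddings, the `φ i` and their
conjugates are `2m = [E : ℚ]` distinct embeddings, so `ψ` is some `φ i` or its conjugate, and
`φ i (α) = σ α` is real. Hence `D_α` is multiplication by `σ α` on the real plane `ℂ · eᵢ`, and
`eᵢ ∧ I·eᵢ` is an eigenvector of `Λ²(D_α)` with eigenvalue `(σ α)²`.
-/

open NumberField

theorem exteriorSquareMap_eq_exteriorPower_map {R M : Type*} [CommRing R] [AddCommGroup M]
    [Module R M] (g : M →ₗ[R] M) : exteriorSquareMap R g = exteriorPower.map 2 g := by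
  ext v
  simp only [LinearMap.compAlternatingMap_apply, exteriorPower.map_apply_ιMulti,
    exteriorPower.ιMulti_apply_coe, exteriorSquareMap, LinearMap.restrict_apply,
    AlgHom.toLinearMap_apply, ExteriorAlgebra.map_apply_ιMulti]

namespace exteriorPower

variable {K V : Type*} [Field K] [AddCommGroup V] [Module K V]

theorem ιMulti_ne_zero_of_linearIndependent {n : ℕ} {v : Fin n → V}
    (hv : LinearIndependent K v) : ιMulti K n v ≠ 0 := by
  simpa [ιMulti_family] using
    (ιMulti_family_linearIndependent_field (n := n) hv).ne_zero
      (Set.powersetCard.ofFinEmbEquiv (OrderIso.refl (Fin n)).toOrderEmbedding)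

theorem hasEigenvalue_map_pow {n : ℕ} (g : Module.End K V) (c : K) {v : Fin n → V}
    (hv : LinearIndependent K v) (hgv : ∀ k, g (v k) = c • v k) :
    Module.End.HasEigenvalue (map n g) (c ^ n) := by
  refine Module.End.hasEigenvalue_of_hasEigenvector
    ⟨Module.End.mem_eigenspace_iff.2 ?_, ιMulti_ne_zero_of_linearIndependent hv⟩
  have : ⇑g ∘ v = fun k => c • v k := funext hgv
  rw [map_apply_ιMulti, this, AlternatingMap.map_smul_univ, Finset.prod_const, Finset.card_univ,
    Fintype.card_fin]

end exteriorPower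

namespace NumberField.ComplexEmbedding

variable {E : Type*} [Field E]

theorem conj_comp_ne_self {ψ : E →+* ℂ} (hψ : ∃ x, (ψ x).im ≠ 0) :
    (starRingEnd ℂ).comp ψ ≠ ψ := by
  obtain ⟨x, hx⟩ := hψ
  intro h
  apply hx
  have := congrArg Complex.im (RingHom.congr_fun h x)
  simp only [RingHom.coe_comp, Function.comp_apply, Complex.conj_im] at this
  linarith

theorem conj_comp_injective :
    Function.Injective ((starRingEnd ℂ).comp : (E →+* ℂ) → (E →+* ℂ)) := fun _ _ h =>
  RingHom.ext fun x => (starRingEnd ℂ).injective (RingHom.congr_fun h x)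

theorem exists_eq_or_eq_conj_comp [NumberField E] {m : ℕ} (hE₂ : Module.finrank ℚ E = m + m)
    (hE : ∀ ψ : E →+* ℂ, ∃ x : E, (ψ x).im ≠ 0) (φ : Fin m → (E →+* ℂ))
    (hφ : ∀ i j : Fin m, i ≠ j → φ j ≠ φ i ∧ φ j ≠ (starRingEnd ℂ).comp (φ i))
    (ψ : E →+* ℂ) : ∃ i, ψ = φ i ∨ ψ = (starRingEnd ℂ).comp (φ i) := by
  have hφ_inj : Function.Injective φ := fun i j h => by
    by_contra hij
    exact (hφ i j hij).1 h.symm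
  have hφ_ne_conj : ∀ i j, φ i ≠ (starRingEnd ℂ).comp (φ j) := fun i j => by
    rcases eq_or_ne j i with rfl | hji
    · exact (conj_comp_ne_self (hE (φ j))).symm
    · exact (hφ j i hji).2
  have hinj : Function.Injective (Sum.elim φ fun i => (starRingEnd ℂ).comp (φ i)) :=
    hφ_inj.sumElim (conj_comp_injective.comp hφ_inj) hφ_ne_conj
  have hcard : Fintype.card (Fin m ⊕ Fin m) = Fintype.card (E →+* ℂ) := by
    rw [Fintype.card_sum, Fintype.card_fin, Embeddings.card, hE₂]
  obtain ⟨i | i, rfl⟩ := ((Fintype.bijective_iff_injective_and_card _).2 ⟨hinj, hcard⟩).2 ψ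
  exacts [⟨i, .inl rfl⟩, ⟨i, .inr rfl⟩]

end NumberField.ComplexEmbedding

theorem cmDiagMap_single (E : Type*) [Field E] (m : ℕ) (φ : Fin m → (E →+* ℂ)) (u : E)
    (i : Fin m) (z : ℂ) : cmDiagMap E m φ u (Pi.single i z) = Pi.single i (φ i u * z) := by
  ext j
  rcases eq_or_ne j i with rfl | hji
  · simp [cmDiagMap]
  · simp [cmDiagMap, Pi.single_eq_of_ne hji]

theorem cm_exteriorSquare_has_large_eigenvalue_general
    (K E : Type*) [Field K] [NumberField K] [Field E] [NumberField E]
    [Algebra K E] (m : ℕ) (hm : Module.finrank ℚ K = m)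
    (hdeg : Module.finrank K E = 2)
    (hE : ∀ ψ : E →+* ℂ, ∃ x : E, (ψ x).im ≠ 0)
    (φ : Fin m → (E →+* ℂ))
    (hφ : ∀ i j : Fin m, i ≠ j →
      φ j ≠ φ i ∧ φ j ≠ (starRingEnd ℂ).comp (φ i))
    (α : K)
    (σ : K →+* ℝ) (hσ : 1 < σ α) :
    Module.End.HasEigenvalue
      (exteriorSquareMap ℝ ((cmDiagMap E m φ (algebraMap K E α)).restrictScalars ℝ))
      (σ α ^ 2) ∧
    ∃ c : ℝ, 1 < c ∧
      Module.End.HasEigenvalue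
        (exteriorSquareMap ℝ ((cmDiagMap E m φ (algebraMap K E α)).restrictScalars ℝ))
        c := by
  have hE₂ : Module.finrank ℚ E = m + m := by
    rw [← Module.finrank_mul_finrank ℚ K E, hm, hdeg, mul_two]
  set ψ := ComplexEmbedding.lift E (Complex.ofRealHom.comp σ)
  obtain ⟨i, hi⟩ := ComplexEmbedding.exists_eq_or_eq_conj_comp hE₂ hE φ hφ ψ
  have hφα : φ i (algebraMap K E α) = σ α := by
    have hψα : ψ (algebraMap K E α) = σ α := ComplexEmbedding.lift_algebraMap_apply E _ α
    rcases hi with h | h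
    · rw [← h, hψα]
    · rw [h, RingHom.comp_apply, ← Complex.conj_ofReal] at hψα
      exact (starRingEnd ℂ).injective hψα
  have hmain : Module.End.HasEigenvalue
      (exteriorSquareMap ℝ ((cmDiagMap E m φ (algebraMap K E α)).restrictScalars ℝ))
      (σ α ^ 2) := by
    have hv : LinearIndependent ℝ fun k => (Pi.single i (Complex.basisOneI k) : Fin m → ℂ) :=
      Complex.basisOneI.linearIndependent.map' (LinearMap.single ℝ (fun _ => ℂ) i)
        (LinearMap.ker_eq_bot.2 (Pi.single_injective (M := fun _ : Fin m => ℂ) i))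
    rw [exteriorSquareMap_eq_exteriorPower_map]
    refine exteriorPower.hasEigenvalue_map_pow _ (σ α) hv fun k => ?_
    rw [LinearMap.restrictScalars_apply, cmDiagMap_single, hφα, ← Complex.real_smul,
      Pi.single_smul]
  exact ⟨hmain, σ α ^ 2, one_lt_pow₀ hσ two_ne_zero, hmain⟩

/-- Let `K` be a totally real number field of degree `m ≥ 2` over `ℚ`, `E` a
totally complex quadratic extension of `K`, `φ₁, …, φ_m : E → ℂ` pairwise
distinct, pairwise non-conjugate complex embeddings, `α` a generator of `K`
over `ℚ`, and `σ : K → ℝ` a real embedding with `σ α > 1`.  Then `σ(α)²` is an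
eigenvalue of the induced `ℝ`-linear endomorphism `Λ²(D_α)` of the second
exterior power of `ℂ^m` over `ℝ`; in particular `Λ²(D_α)` has an eigenvalue
strictly greater than `1`. -/
theorem cm_exteriorSquare_has_large_eigenvalue
    (K E : Type*) [Field K] [NumberField K] [Field E] [NumberField E]
    [Algebra K E] (m : ℕ) (hm2 : 2 ≤ m) (hm : Module.finrank ℚ K = m)
    (hdeg : Module.finrank K E = 2)
    (hK : ∀ τ : K →+* ℂ, ∀ x : K, (τ x).im = 0)
    (hE : ∀ ψ : E →+* ℂ, ∃ x : E, (ψ x).im ≠ 0)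
    (φ : Fin m → (E →+* ℂ))
    (hφ : ∀ i j : Fin m, i ≠ j →
      φ j ≠ φ i ∧ φ j ≠ (starRingEnd ℂ).comp (φ i))
    (α : K) (hα : IntermediateField.adjoin ℚ {α} = ⊤)
    (σ : K →+* ℝ) (hσ : 1 < σ α) :
    Module.End.HasEigenvalue
      (exteriorSquareMap ℝ ((cmDiagMap E m φ (algebraMap K E α)).restrictScalars ℝ))
      (σ α ^ 2) ∧
    ∃ c : ℝ, 1 < c ∧
      Module.End.HasEigenvalue
        (exteriorSquareMap ℝ ((cmDiagMap E m φ (algebraMap K E α)).restrictScalars ℝ))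
        c :=
  cm_exteriorSquare_has_large_eigenvalue_general K E m hm hdeg hE φ hφ α σ hσ
end

section
/- Let K be a totally real number field of degree m over ℚ, let E be a totally complex extension of K with [E : K] = 2, let φ₁, …, φ_m : E → ℂ be pairwise distinct, pairwise non-conjugate ring embeddings, set Φ(a) = (φ₁(a), …, φ_m(a)) and Λ := Φ(O_E). Let α ∈ K be a unit of O_K such that σ(α) > 1 for some real embedding σ : K → ℝ, and let f_α be the automorphism of the quotient group ℂ^m / Λ induced by the diagonal map D_α(z)_i = φ_i(algebraMap K E α)·z_i. Then f_α has infinite order: f_α^n is not the identity of ℂ^m / Λ for every integer n ≥ 1. -/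
/-!
Some real embedding of `α` exceeds `1`, so `α` is not a root of unity, and neither is any
eigenvalue `φᵢ(α)` of `D_α`. If `n • f_α = 0`, then `D_αⁿ - 1` would map `ℂ^m` into the
countable group `Λ`; but it is injective on each coordinate line, a copy of `ℂ`.
-/

open NumberField

/-- The image `Λ = Φ(O_E)` of the ring of integers of `E` under the embedding
`Φ = (φ₁, …, φ_m) : E → ℂ^m`, as an additive subgroup of `ℂ^m`. -/
noncomputable def cmLattice (E : Type*) [Field E] [NumberField E]
    (m : ℕ) (φ : Fin m → (E →+* ℂ)) : AddSubgroup (Fin m → ℂ) :=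
  AddMonoidHom.range
    { toFun := fun a : 𝓞 E => fun i => φ i (a : E)
      map_zero' := by funext i; simp
      map_add' := by intro a b; funext i; push_cast; simp }

namespace AddAut

variable {G : Type*} [AddCommGroup G] {H : AddSubgroup G} {f : AddAut (G ⧸ H)} {D : G → G}

theorem nsmul_apply_mk_of_apply_mk
    (hf : ∀ z, f (QuotientAddGroup.mk' H z) = QuotientAddGroup.mk' H (D z)) (n : ℕ)
    (z : G) : (n • f) (QuotientAddGroup.mk' H z) = QuotientAddGroup.mk' H (D^[n] z) := by
  induction n generalizing z with
  | zero => rfl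
  | succ n ih => rw [succ_nsmul, add_apply, hf, ih, Function.iterate_succ_apply]

theorem iterate_sub_mem_of_nsmul_eq_zero
    (hf : ∀ z, f (QuotientAddGroup.mk' H z) = QuotientAddGroup.mk' H (D z)) {n : ℕ}
    (hn : n • f = 0) (z : G) : D^[n] z - z ∈ H := by
  have h := nsmul_apply_mk_of_apply_mk hf n z
  rw [hn] at h
  rw [sub_eq_neg_add]
  exact QuotientAddGroup.eq.mp h

end AddAut

theorem RingHom.pow_ne_one_of_one_lt_apply {F R : Type*} [DivisionRing F] [Semiring R]
    [Nontrivial R] (τ : F →+* R) (σ : F →+* ℝ) {x : F} (hx : 1 < σ x) {n : ℕ}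
    (hn : n ≠ 0) : τ x ^ n ≠ 1 := by
  rw [← map_pow, ← map_one τ, τ.injective.ne_iff]
  intro h
  have := one_lt_pow₀ hx hn
  rw [← map_pow, h, map_one] at this
  exact this.false

instance NumberField.RingOfIntegers.countable (E : Type*) [Field E] [NumberField E] :
    Countable (𝓞 E) :=
  (RingOfIntegers.basis E).equivFun.toEquiv.countable_iff.mpr inferInstance

instance cmLattice.countable (E : Type*) [Field E] [NumberField E] (m : ℕ)
    (φ : Fin m → (E →+* ℂ)) : Countable (cmLattice E m φ) :=
  (Set.countable_range _).to_subtype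

theorem cmDiagMap_iterate_apply (E : Type*) [Field E] (m : ℕ) (φ : Fin m → (E →+* ℂ))
    (u : E) (k : ℕ) (z : Fin m → ℂ) (i : Fin m) :
    (cmDiagMap E m φ u)^[k] z i = φ i u ^ k * z i := by
  induction k generalizing z with
  | zero => simp
  | succ k ih =>
    rw [Function.iterate_succ_apply, ih]
    simp [cmDiagMap, pow_succ, mul_assoc]

theorem cm_translation_automorphism_infinite_order_general
    (K E : Type*) [Field K] [NumberField K] [Field E] [NumberField E]
    [Algebra K E] (m : ℕ) (hm : Module.finrank ℚ K = m)
    (φ : Fin m → (E →+* ℂ))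
    (α : 𝓞 K)
    (σ : K →+* ℝ) (hσ : 1 < σ (α : K)) :
    ∀ f : AddAut ((Fin m → ℂ) ⧸ cmLattice E m φ),
      (∀ z : Fin m → ℂ,
        f (QuotientAddGroup.mk' (cmLattice E m φ) z) =
          QuotientAddGroup.mk' (cmLattice E m φ)
            (cmDiagMap E m φ (algebraMap K E (α : K)) z)) →
      ∀ n : ℕ, 1 ≤ n → n • f ≠ 0 := by
  intro f hf n hn hfn
  set D := cmDiagMap E m φ (algebraMap K E (α : K))
  let i : Fin m := ⟨0, hm ▸ Module.finrank_pos⟩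
  have hroot : φ i (algebraMap K E α) ^ n - 1 ≠ 0 :=
    sub_ne_zero.mpr <| ((φ i).comp (algebraMap K E)).pow_ne_one_of_one_lt_apply σ hσ (by omega)
  let line : ℂ → cmLattice E m φ := fun t =>
    ⟨D^[n] (Pi.single i t) - Pi.single i t, AddAut.iterate_sub_mem_of_nsmul_eq_zero hf hfn _⟩
  have hline : Function.Injective line := fun s t hst => by
    have := congrFun (congrArg Subtype.val hst) i
    simp only [line, Pi.sub_apply, cmDiagMap_iterate_apply, D, Pi.single_eq_same] at this
    exact mul_left_cancel₀ hroot (by linear_combination this)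
  exact (Set.countable_univ_iff.not.mp not_countable_complex) hline.countable

/-- Let `K` be a totally real number field of degree `m` over `ℚ`, `E` a
totally complex quadratic extension of `K`, `φ₁, …, φ_m : E → ℂ` pairwise
distinct, pairwise non-conjugate complex embeddings, and `Λ = Φ(O_E)`.  Let
`α` be a unit of the ring of integers of `K` with `σ α > 1` for some real
embedding `σ : K → ℝ`.  Then any automorphism `f_α` of the quotient group
`ℂ^m / Λ` induced by the diagonal map `D_α` (i.e. with `f_α ∘ π = π ∘ D_α`)
has infinite order: `f_α ^ n ≠ 1` for all `n ≥ 1`. -/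
theorem cm_translation_automorphism_infinite_order
    (K E : Type*) [Field K] [NumberField K] [Field E] [NumberField E]
    [Algebra K E] (m : ℕ) (hm : Module.finrank ℚ K = m)
    (hdeg : Module.finrank K E = 2)
    (hK : ∀ τ : K →+* ℂ, ∀ x : K, (τ x).im = 0)
    (hE : ∀ ψ : E →+* ℂ, ∃ x : E, (ψ x).im ≠ 0)
    (φ : Fin m → (E →+* ℂ))
    (hφ : ∀ i j : Fin m, i ≠ j →
      φ j ≠ φ i ∧ φ j ≠ (starRingEnd ℂ).comp (φ i))
    (α : 𝓞 K) (hunit : IsUnit α)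
    (σ : K →+* ℝ) (hσ : 1 < σ (α : K)) :
    ∀ f : AddAut ((Fin m → ℂ) ⧸ cmLattice E m φ),
      (∀ z : Fin m → ℂ,
        f (QuotientAddGroup.mk' (cmLattice E m φ) z) =
          QuotientAddGroup.mk' (cmLattice E m φ)
            (cmDiagMap E m φ (algebraMap K E (α : K)) z)) →
      ∀ n : ℕ, 1 ≤ n → n • f ≠ 0 :=
  cm_translation_automorphism_infinite_order_general K E m hm φ α σ hσ
end
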